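/- Suppose 𝒜ℐ₁ and 𝒜ℐ₂ are strongly non-conflating interpreted extended architectures (with compatible interpretations). If 𝒜ℐ₁ ⊑_r 𝒜ℐ₂ (r is a refinement mapping satisfying conditions T1–T3), then 𝒜ℐ₁ ≼_r 𝒜ℐ₂ (r is a semantic refinement mapping). -/

import Mathlib

structure Machine (S A D O : Type) where
  s0 : S
  step : S → A → S
  dom : A → D
  obs : D → S → O

namespace Machine

def run {S A D O : Type} (M : Machine S A D O) (α : List A) : S :=
  α.foldl M.step M.s0

end Machine
/-- An extended architecture: `edge u v = none` means no edge, `edge u v = some none`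
means an edge labelled `⊤`, and `edge u v = some (some f)` means an edge labelled by
the filter-function name `f`.  There is at most one label per ordered pair by
construction, and the relation is reflexive with label `⊤`. -/
structure ExtArch (D L : Type) where
  edge : D → D → Option (Option L)
  refl : ∀ u, edge u u = some none

/-- Values of the `tf` function and of filter-function interpretations:
`eps` is the empty value ε, `base v` an arbitrary basic value, and
`pair σ a` the pair `(σ, a)` of a `tf` value and an action. -/
inductive TFVal (A V : Type) where
  | eps : TFVal A V
  | base : V → TFVal A V
  | pair : List (TFVal A V) → A → TFVal A V

/-- `σ ⌢ x`: appends `x` as a single new last element unless `x = ε`. -/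
def snoc' {A V : Type} (σ : List (TFVal A V)) : TFVal A V → List (TFVal A V)
  | .eps => σ
  | x => σ ++ [x]

/-- `tf`, computed on the reversed action sequence. -/
def tfR {A D L V : Type} (Arch : ExtArch D L) (dm : A → D)
    (I : L → List A → A → TFVal A V) : List A → D → List (TFVal A V)
  | [], _ => []
  | a :: ρ, u =>
    match Arch.edge (dm a) u with
    | none => tfR Arch dm I ρ u
    | some none => tfR Arch dm I ρ u ++ [TFVal.pair (tfR Arch dm I ρ (dm a)) a]
    | some (some f) => snoc' (tfR Arch dm I ρ u) (I f ρ.reverse a)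

/-- `tf Arch dm I α u` : maximal information domain `u` is permitted to have after `α`. -/
def tf {A D L V : Type} (Arch : ExtArch D L) (dm : A → D)
    (I : L → List A → A → TFVal A V) (α : List A) (u : D) : List (TFVal A V) :=
  tfR Arch dm I α.reverse u

/-- `inF Arch dm I α a u` : the information `in_{dom(a),u}(α, a)` transmitted to `u`
when action `a` is performed after `α`. -/
def inF {A D L V : Type} (Arch : ExtArch D L) (dm : A → D)
    (I : L → List A → A → TFVal A V) (α : List A) (a : A) (u : D) : TFVal A V :=
  match Arch.edge (dm a) u with
  | none => TFVal.eps
  | some none => TFVal.pair (tf Arch dm I α (dm a)) a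
  | some (some f) => I f α a
/-- A strongly non-conflating interpreted architecture. -/
def StronglyNonConflating {A D L V : Type} (Arch : ExtArch D L) (dm : A → D)
    (I : L → List A → A → TFVal A V) : Prop :=
  ∀ (u v w : D) (f : L), Arch.edge u w = some (some f) → Arch.edge v w = some none →
    ∀ (a b : A), dm a = u → dm b = v →
      ∀ (α β : List A), I f α a ≠ TFVal.pair (tf Arch dm I β v) b

/-- A compatible interpretation: `𝕀(f)` is `tf_u`-compatible for every edge
`u ↝_f v` with `f ∈ L`. -/
def Compatible {A D L V : Type} (Arch : ExtArch D L) (dm : A → D)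
    (I : L → List A → A → TFVal A V) : Prop :=
  ∀ (u v : D) (f : L), Arch.edge u v = some (some f) →
    ∀ (α β : List A), tf Arch dm I α u = tf Arch dm I β u →
      ∀ (a : A), dm a = u → I f α a = I f β a
/-- `r` is a semantic refinement mapping from `(A₁, dm₁, I₁)` to `(A₂, dm₂, I₂)`. -/
def SemRef {A D₁ D₂ L₁ L₂ V₁ V₂ : Type} (A₁ : ExtArch D₁ L₁) (dm₁ : A → D₁)
    (I₁ : L₁ → List A → A → TFVal A V₁) (A₂ : ExtArch D₂ L₂) (dm₂ : A → D₂)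
    (I₂ : L₂ → List A → A → TFVal A V₂) (r : D₁ → D₂) : Prop :=
  Function.Surjective r ∧ dm₂ = r ∘ dm₁ ∧
    ∀ (u : D₁) (α β : List A),
      tf A₂ dm₂ I₂ α (r u) = tf A₂ dm₂ I₂ β (r u) →
        tf A₁ dm₁ I₁ α u = tf A₁ dm₁ I₁ β u
/-- `r` is a refinement mapping from `(A₁, dm₁, I₁)` to `(A₂, dm₂, I₂)`,
i.e. conditions T1–T3 hold. -/
def TRef {A D₁ D₂ L₁ L₂ V₁ V₂ : Type} (A₁ : ExtArch D₁ L₁) (dm₁ : A → D₁)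
    (I₁ : L₁ → List A → A → TFVal A V₁) (A₂ : ExtArch D₂ L₂) (dm₂ : A → D₂)
    (I₂ : L₂ → List A → A → TFVal A V₂) (r : D₁ → D₂) : Prop :=
  -- T1
  (Function.Surjective r ∧ dm₂ = r ∘ dm₁) ∧
  -- T2
  (∀ (u v : D₁) (α : List A) (a : A), dm₁ a = u →
    inF A₂ dm₂ I₂ α a (r v) = TFVal.eps → inF A₁ dm₁ I₁ α a v = TFVal.eps) ∧
  -- T3
  (∀ (v : D₁) (α β : List A) (a b : A),
    inF A₂ dm₂ I₂ α a (r v) = inF A₂ dm₂ I₂ β b (r v) →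
    inF A₂ dm₂ I₂ α a (r v) ≠ TFVal.eps →
    (a = b ∧ A₂.edge (dm₂ a) (r v) = some none) ∨
      inF A₁ dm₁ I₁ α a v = inF A₁ dm₁ I₁ β b v)

/-!
Read backwards, `tf_u(α)` gains one entry for each action of `α` whose `in`-value to `u` is
not `ε`. Compare `tf₂` of two sequences from their ends: by T2 an action invisible to `r u` in
`𝒜ℐ₂` is invisible to `u` in `𝒜ℐ₁`, so it can be dropped on both sides; once both last actions
are visible, their `in₂`-values agree, and T3 makes their `in₁`-values agree, either directly
or because they are the same action transmitted with label `⊤`, in which case the induction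
hypothesis at its source domain and compatibility of `𝕀₁` do it.
-/

section Architecture

variable {A D L V : Type} {Arch : ExtArch D L} {dm : A → D} {I : L → List A → A → TFVal A V}

lemma snoc'_of_ne_eps (σ : List (TFVal A V)) {x : TFVal A V} (hx : x ≠ TFVal.eps) :
    snoc' σ x = σ ++ [x] := by
  cases x <;> simp_all [snoc']

lemma tfR_cons (a : A) (ρ : List A) (u : D) :
    tfR Arch dm I (a :: ρ) u = snoc' (tfR Arch dm I ρ u) (inF Arch dm I ρ.reverse a u) := by
  rcases h : Arch.edge (dm a) u with _ | _ | f <;> simp [tfR, inF, tf, h, snoc']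

lemma tfR_cons_of_inF_eq_eps {a : A} {ρ : List A} {u : D}
    (ha : inF Arch dm I ρ.reverse a u = TFVal.eps) :
    tfR Arch dm I (a :: ρ) u = tfR Arch dm I ρ u := by
  rw [tfR_cons, ha, snoc']

lemma tfR_cons_of_inF_ne_eps {a : A} {ρ : List A} {u : D}
    (ha : inF Arch dm I ρ.reverse a u ≠ TFVal.eps) :
    tfR Arch dm I (a :: ρ) u = tfR Arch dm I ρ u ++ [inF Arch dm I ρ.reverse a u] := by
  rw [tfR_cons, snoc'_of_ne_eps _ ha]

lemma inF_of_edge_eq_top {α : List A} {a : A} {u : D} (h : Arch.edge (dm a) u = some none) :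
    inF Arch dm I α a u = TFVal.pair (tf Arch dm I α (dm a)) a := by
  simp [inF, h]

lemma Compatible.inF_eq (hc : Compatible Arch dm I) {α β : List A} {a : A} (v : D)
    (h : tf Arch dm I α (dm a) = tf Arch dm I β (dm a)) :
    inF Arch dm I α a v = inF Arch dm I β a v := by
  rcases he : Arch.edge (dm a) v with _ | _ | f
  · simp [inF, he]
  · simp [inF, he, h]
  · simpa [inF, he] using hc _ v f he α β h a rfl

end Architecture

section Refinement

variable {A D₁ D₂ L₁ L₂ V₁ V₂ : Type}
  {A₁ : ExtArch D₁ L₁} {dm₁ : A → D₁} {I₁ : L₁ → List A → A → TFVal A V₁}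
  {A₂ : ExtArch D₂ L₂} {dm₂ : A → D₂} {I₂ : L₂ → List A → A → TFVal A V₂}
  {r : D₁ → D₂}

lemma tfR_eq_nil_of_refines (hT : TRef A₁ dm₁ I₁ A₂ dm₂ I₂ r) {σ : List A} {u : D₁}
    (h : tfR A₂ dm₂ I₂ σ (r u) = []) : tfR A₁ dm₁ I₁ σ u = [] := by
  induction σ with
  | nil => rfl
  | cons b σ ih =>
    by_cases hb : inF A₂ dm₂ I₂ σ.reverse b (r u) = TFVal.eps
    · rw [tfR_cons_of_inF_eq_eps (hT.2.1 _ u _ b rfl hb)]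
      exact ih (by rwa [tfR_cons_of_inF_eq_eps hb] at h)
    · simp [tfR_cons_of_inF_ne_eps hb] at h

lemma tfR_eq_of_refines (hc₁ : Compatible A₁ dm₁ I₁) (hT : TRef A₁ dm₁ I₁ A₂ dm₂ I₂ r)
    {ρ σ : List A} {u : D₁} (h : tfR A₂ dm₂ I₂ ρ (r u) = tfR A₂ dm₂ I₂ σ (r u)) :
    tfR A₁ dm₁ I₁ ρ u = tfR A₁ dm₁ I₁ σ u := by
  induction ρ generalizing σ u with
  | nil => exact (tfR_eq_nil_of_refines hT h.symm).symm
  | cons a ρ ih =>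
    induction σ with
    | nil => exact tfR_eq_nil_of_refines hT h
    | cons b σ ihσ =>
      by_cases ha : inF A₂ dm₂ I₂ ρ.reverse a (r u) = TFVal.eps
      · rw [tfR_cons_of_inF_eq_eps (hT.2.1 _ u _ a rfl ha)]
        exact ih (by rwa [tfR_cons_of_inF_eq_eps ha] at h)
      by_cases hb : inF A₂ dm₂ I₂ σ.reverse b (r u) = TFVal.eps
      · rw [tfR_cons_of_inF_eq_eps (hT.2.1 _ u _ b rfl hb)]
        exact ihσ (by rwa [tfR_cons_of_inF_eq_eps hb] at h)
      obtain ⟨hρσ, hab⟩ : tfR A₂ dm₂ I₂ ρ (r u) = tfR A₂ dm₂ I₂ σ (r u) ∧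
          inF A₂ dm₂ I₂ ρ.reverse a (r u) = inF A₂ dm₂ I₂ σ.reverse b (r u) := by
        simpa [tfR_cons_of_inF_ne_eps ha, tfR_cons_of_inF_ne_eps hb] using h
      rw [tfR_cons, tfR_cons, ih hρσ]
      rcases hT.2.2 u _ _ a b hab ha with ⟨rfl, htop⟩ | hin₁
      · rw [inF_of_edge_eq_top htop, inF_of_edge_eq_top htop, TFVal.pair.injEq] at hab
        have hsrc : tfR A₂ dm₂ I₂ ρ (r (dm₁ a)) = tfR A₂ dm₂ I₂ σ (r (dm₁ a)) := by
          simpa only [tf, List.reverse_reverse, hT.1.2, Function.comp_apply] using hab.1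
        rw [hc₁.inF_eq (α := ρ.reverse) (β := σ.reverse) u
          (by simpa only [tf, List.reverse_reverse] using ih hsrc)]
      · rw [hin₁]

end Refinement

theorem statement15_general {A D₁ D₂ L₁ L₂ V₁ V₂ : Type}
    (A₁ : ExtArch D₁ L₁) (dm₁ : A → D₁) (I₁ : L₁ → List A → A → TFVal A V₁)
    (A₂ : ExtArch D₂ L₂) (dm₂ : A → D₂) (I₂ : L₂ → List A → A → TFVal A V₂)
    (r : D₁ → D₂)
    (hc₁ : Compatible A₁ dm₁ I₁)
    (hT : TRef A₁ dm₁ I₁ A₂ dm₂ I₂ r) :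
    SemRef A₁ dm₁ I₁ A₂ dm₂ I₂ r :=
  ⟨hT.1.1, hT.1.2, fun _ _ _ h => tfR_eq_of_refines hc₁ hT h⟩

/-- for strongly non-conflating interpreted architectures (with
compatible interpretations), a refinement mapping (T1–T3) is a semantic
refinement mapping. -/
theorem statement15 {A D₁ D₂ L₁ L₂ V₁ V₂ : Type}
    (A₁ : ExtArch D₁ L₁) (dm₁ : A → D₁) (I₁ : L₁ → List A → A → TFVal A V₁)
    (A₂ : ExtArch D₂ L₂) (dm₂ : A → D₂) (I₂ : L₂ → List A → A → TFVal A V₂)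
    (r : D₁ → D₂)
    (hc₁ : Compatible A₁ dm₁ I₁) (hc₂ : Compatible A₂ dm₂ I₂)
    (hs₁ : StronglyNonConflating A₁ dm₁ I₁)
    (hs₂ : StronglyNonConflating A₂ dm₂ I₂)
    (hT : TRef A₁ dm₁ I₁ A₂ dm₂ I₂ r) :
    SemRef A₁ dm₁ I₁ A₂ dm₂ I₂ r :=
  statement15_general A₁ dm₁ I₁ A₂ dm₂ I₂ r hc₁ hT
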